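/- arXiv:2508.06987 — 6 statements merged into one kernel-verified Lean document; each statement's English description precedes it below -/
import Mathlib

section
/- Let f : ℝ → ℝ be a Unit-Safe Saturating Function with constant ε > 0, and define g(x) = |x| − x·f(x) for x ∈ ℝ. Then sup_{x ∈ ℝ} g(x) ≤ ε; equivalently, |x| − x·f(x) ≤ ε for every x ∈ ℝ. -/
open Filter Topology

/-- **Theorem (USSF scaling bound).**
Let `f : ℝ → ℝ` be a Unit-Safe Saturating Function with constant `ε > 0`:
smooth, odd, strictly increasing derivative-wise, saturating to `±1`, and
slope-limited (`x² f'(x) ≤ ε`).  Define `g x = |x| - x * f x`.  Then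
`g x ≤ ε` for every `x` (equivalently, `sup g ≤ ε`). -/
theorem ussf_sup_bound (f : ℝ → ℝ) (ε : ℝ) (hε : 0 < ε)
    (hsmooth : ContDiff ℝ (⊤ : ℕ∞) f)
    (hodd : ∀ x : ℝ, f (-x) = -f x)
    (hderiv_pos : ∀ x : ℝ, 0 < deriv f x)
    (hsat_top : Tendsto f atTop (𝓝 1))
    (hsat_bot : Tendsto f atBot (𝓝 (-1)))
    (hslope : ∀ x : ℝ, x ^ 2 * deriv f x ≤ ε) :
    ∀ x : ℝ, |x| - x * f x ≤ ε := by
  have hdiff : Differentiable ℝ f := hsmooth.differentiable (by simp)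
  set φ : ℝ → ℝ := fun t => f t + ε * t⁻¹ with hφ
  have hφderiv : ∀ t ∈ Set.Ioi (0:ℝ), HasDerivAt φ (deriv f t + ε * (-(t ^ 2)⁻¹)) t := by
    intro t ht
    exact (hdiff t).hasDerivAt.add (((hasDerivAt_inv (ne_of_gt ht)).const_mul ε))
  have hanti : AntitoneOn φ (Set.Ioi (0:ℝ)) := by
    apply antitoneOn_of_deriv_nonpos (convex_Ioi 0)
    · exact fun t ht => ((hφderiv t ht).continuousAt).continuousWithinAt
    · intro t ht
      rw [interior_Ioi] at ht
      exact ((hφderiv t ht).differentiableAt).differentiableWithinAt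
    · intro t ht
      rw [interior_Ioi] at ht
      rw [(hφderiv t ht).deriv]
      have htpos : (0:ℝ) < t := ht
      have ht2 : (0:ℝ) < t ^ 2 := by positivity
      have h1 : deriv f t ≤ ε / t ^ 2 := by
        rw [le_div_iff₀ ht2]; linarith [hslope t]
      have heq : ε * (-(t ^ 2)⁻¹) = -(ε / t ^ 2) := by field_simp
      rw [heq]
      linarith
  have hlim : Tendsto φ atTop (𝓝 1) := by
    have : Tendsto (fun t : ℝ => ε * t⁻¹) atTop (𝓝 (ε * 0)) :=
      tendsto_inv_atTop_zero.const_mul ε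
    simpa using hsat_top.add this
  have key : ∀ x : ℝ, 0 < x → x - x * f x ≤ ε := by
    intro x hx
    have h1 : (1:ℝ) ≤ φ x := by
      apply le_of_tendsto hlim
      filter_upwards [eventually_ge_atTop x] with t ht
      exact hanti hx (lt_of_lt_of_le hx ht) ht
    have : 1 ≤ f x + ε * x⁻¹ := h1
    have hxne : x ≠ 0 := ne_of_gt hx
    have : x ≤ x * f x + ε := by
      have := mul_le_mul_of_nonneg_left this hx.le
      field_simp at this ⊢
      linarith
    linarith
  intro x
  rcases lt_trichotomy x 0 with hx | hx | hx
  · have h := key (-x) (by linarith)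
    rw [hodd x] at h
    rw [abs_of_neg hx]
    nlinarith [h]
  · simp [hx]; linarith
  · rw [abs_of_pos hx]; exact key x hx
end

section
/- Let f : ℝ → ℝ be a Unit-Safe Saturating Function with constant ε > 0. Then x·f(x) ≥ |x| − ε for every x ∈ ℝ. -/
open Filter Topology

/-- **Theorem.** If `f` is a Unit-Safe Saturating Function with constant `ε > 0`,
then `x * f x ≥ |x| - ε` for every real `x`. -/
theorem ussf_mul_lower_bound (f : ℝ → ℝ) (ε : ℝ) (hε : 0 < ε)
    (hsmooth : ContDiff ℝ (⊤ : ℕ∞) f)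
    (hodd : ∀ x : ℝ, f (-x) = -f x)
    (hderiv_pos : ∀ x : ℝ, 0 < deriv f x)
    (hsat_top : Tendsto f atTop (𝓝 1))
    (hsat_bot : Tendsto f atBot (𝓝 (-1)))
    (hslope : ∀ x : ℝ, x ^ 2 * deriv f x ≤ ε) :
    ∀ x : ℝ, x * f x ≥ |x| - ε := by
  have hdiff : Differentiable ℝ f := hsmooth.differentiable (by simp)
  have hcont : Continuous (deriv f) := hsmooth.continuous_deriv (by simp)
  have key : ∀ x : ℝ, 0 < x → x * f x ≥ x - ε := by
    intro x hx
    have hbound : ∀ y : ℝ, x ≤ y → f y ≤ f x + ε / x := by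
      intro y hxy
      have hftc : ∫ t in x..y, deriv f t = f y - f x :=
        intervalIntegral.integral_deriv_eq_sub (fun t _ => hdiff t)
          (hcont.intervalIntegrable x y)
      have hne : (0:ℝ) ∉ Set.uIcc x y := by
        rw [Set.uIcc_of_le hxy]
        intro h
        exact absurd h.1 (not_le.mpr hx)
      have hint2 : IntervalIntegrable (fun t : ℝ => ε * t ^ (-2 : ℤ))
          MeasureTheory.volume x y := by
        apply ContinuousOn.intervalIntegrable
        apply ContinuousOn.mul continuousOn_const
        apply ContinuousOn.zpow₀ continuousOn_id
        intro t ht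
        left
        intro h
        exact hne (h ▸ ht)
      have hmono : ∫ t in x..y, deriv f t ≤ ∫ t in x..y, ε * t ^ (-2 : ℤ) := by
        apply intervalIntegral.integral_mono_on hxy (hcont.intervalIntegrable x y) hint2
        intro t ht
        have ht0 : 0 < t := lt_of_lt_of_le hx ht.1
        have h2 : deriv f t ≤ ε / t ^ 2 := by
          rw [le_div_iff₀ (by positivity)]
          linarith [hslope t]
        have h3 : ε * t ^ (-2 : ℤ) = ε / t ^ 2 := by
          rw [zpow_neg, ← div_eq_mul_inv]
          norm_num [zpow_ofNat]
        rw [h3]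
        exact h2
      have hval : ∫ t in x..y, ε * t ^ (-2 : ℤ) = ε * (x⁻¹ - y⁻¹) := by
        rw [intervalIntegral.integral_const_mul,
          integral_zpow (Or.inr ⟨by norm_num, hne⟩)]
        norm_num
        left
        ring
      have hy0 : 0 < y := lt_of_lt_of_le hx hxy
      have : f y - f x ≤ ε * (x⁻¹ - y⁻¹) := by
        rw [← hftc, ← hval]; exact hmono
      have hyi : 0 ≤ y⁻¹ := by positivity
      have : f y - f x ≤ ε / x := by
        rw [div_eq_mul_inv]
        nlinarith
      linarith
    have h1 : (1:ℝ) ≤ f x + ε / x :=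
      le_of_tendsto hsat_top (Filter.eventually_atTop.mpr ⟨x, hbound⟩)
    have hxne : x ≠ 0 := ne_of_gt hx
    have := mul_le_mul_of_nonneg_left h1 (le_of_lt hx)
    rw [mul_add, mul_div_cancel₀ _ hxne] at this
    linarith
  intro x
  rcases lt_trichotomy x 0 with hx | hx | hx
  · have hx' : (0:ℝ) < -x := by linarith
    have := key (-x) hx'
    rw [hodd x] at this
    rw [abs_of_neg hx]
    nlinarith [this]
  · subst hx
    have h0 : f 0 = 0 := by
      have := hodd 0
      simp at this
      linarith
    simp [h0]
    linarith
  · rw [abs_of_pos hx]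
    exact key x hx
end

section
/- The hyperbolic tangent tanh : ℝ → ℝ is a Unit-Safe Saturating Function with constant ε = 1/2; that is, tanh is infinitely differentiable, odd, has strictly positive derivative 1 − tanh²(x) > 0 everywhere, satisfies lim_{x→+∞} tanh(x) = 1 and lim_{x→−∞} tanh(x) = −1, and x²·(1 − tanh²(x)) ≤ 1/2 for all x ∈ ℝ. -/
open Filter Topology

private lemma tanh_eq_fun : Real.tanh = fun x => Real.sinh x / Real.cosh x :=
  funext fun x => Real.tanh_eq_sinh_div_cosh x

private lemma poly_bound (y : ℝ) (hy : 0 ≤ y) :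
    8 * y ^ 2 ≤ (1 + y + y ^ 2 / 2 + y ^ 3 / 6) ^ 2 + 2 := by
  nlinarith [sq_nonneg (y - 1), sq_nonneg (y ^ 2 - 2 * y), sq_nonneg (y ^ 2 - y - 1),
    mul_nonneg (mul_nonneg hy hy) hy, sq_nonneg (y ^ 2 - 2), sq_nonneg y,
    mul_nonneg (sq_nonneg (y - 1)) hy, mul_nonneg (sq_nonneg (y - 1)) (sq_nonneg y)]

private lemma key_cosh_sq (x : ℝ) : 2 * x ^ 2 ≤ Real.cosh x ^ 2 := by
  rw [← Real.cosh_abs]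
  set y := |x| with hy
  have hy0 : 0 ≤ y := abs_nonneg x
  have hx2 : x ^ 2 = y ^ 2 := (sq_abs x).symm
  rw [hx2]
  have hs : 1 + y + y ^ 2 / 2 + y ^ 3 / 6 ≤ Real.exp y := by
    have hsum := Real.sum_le_exp_of_nonneg hy0 4
    have he : ∑ i ∈ Finset.range 4, y ^ i / (Nat.factorial i : ℝ)
        = 1 + y + y ^ 2 / 2 + y ^ 3 / 6 := by
      simp [Finset.sum_range_succ, Nat.factorial]
    linarith [he ▸ hsum]
  have hp : (0:ℝ) ≤ 1 + y + y ^ 2 / 2 + y ^ 3 / 6 := by positivity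
  have ha2 : (1 + y + y ^ 2 / 2 + y ^ 3 / 6) ^ 2 ≤ Real.exp y ^ 2 :=
    pow_le_pow_left₀ hp hs 2
  have hb : 0 < Real.exp (-y) := Real.exp_pos _
  have hab : Real.exp y * Real.exp (-y) = 1 := by
    rw [← Real.exp_add]; simp
  rw [Real.cosh_eq]
  nlinarith [poly_bound y hy0, sq_nonneg (Real.exp (-y))]

private lemma tanh_deriv (x : ℝ) :
    HasDerivAt Real.tanh (1 - Real.tanh x ^ 2) x := by
  have hc := Real.cosh_pos x
  have h := (Real.hasDerivAt_sinh x).div (Real.hasDerivAt_cosh x) hc.ne'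
  rw [tanh_eq_fun]
  convert h using 1
  · rfl
  · rfl
  · rfl
  have hid := Real.cosh_sq_sub_sinh_sq x
  field_simp

private lemma one_sub_tanh_sq (x : ℝ) :
    1 - Real.tanh x ^ 2 = 1 / Real.cosh x ^ 2 := by
  have hc := Real.cosh_pos x
  have hid := Real.cosh_sq_sub_sinh_sq x
  rw [Real.tanh_eq_sinh_div_cosh, div_pow]
  field_simp
  exact hid

private lemma tanh_tendsto_atTop : Tendsto Real.tanh atTop (𝓝 1) := by
  have heq : ∀ x : ℝ, Real.tanh x = (1 - Real.exp (-2 * x)) / (1 + Real.exp (-2 * x)) := by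
    intro x
    have h1 : (0:ℝ) < Real.exp x := Real.exp_pos x
    have h2 : (0:ℝ) < 1 + Real.exp (-2 * x) := by positivity
    have h3 : Real.exp (-2 * x) = Real.exp (-x) * Real.exp (-x) := by
      rw [← Real.exp_add]; ring_nf
    have hmul : Real.exp x * Real.exp (-x) = 1 := by
      rw [← Real.exp_add]; simp
    rw [Real.tanh_eq_sinh_div_cosh, Real.sinh_eq, Real.cosh_eq, h3]
    have h4 : (0:ℝ) < Real.exp x + Real.exp (-x) := by positivity
    have h5 : (0:ℝ) < 1 + Real.exp (-x) * Real.exp (-x) := by positivity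
    rw [div_eq_div_iff (by positivity) h5.ne']
    field_simp
    linear_combination (2 * Real.exp (-x)) * hmul
  rw [funext heq]
  have hexp : Tendsto (fun x : ℝ => Real.exp (-2 * x)) atTop (𝓝 0) :=
    Real.tendsto_exp_atBot.comp
      ((tendsto_const_mul_atBot_of_neg (by norm_num : (-2:ℝ) < 0)).mpr tendsto_id)
  have h : Tendsto (fun x : ℝ => (1 - Real.exp (-2 * x)) / (1 + Real.exp (-2 * x)))
      atTop (𝓝 ((1 - 0) / (1 + 0))) :=
    (tendsto_const_nhds.sub hexp).div (tendsto_const_nhds.add hexp) (by norm_num)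
  simpa using h

private lemma tanh_tendsto_atBot : Tendsto Real.tanh atBot (𝓝 (-1)) := by
  have h : Tendsto (fun x : ℝ => -Real.tanh (-x)) atBot (𝓝 (-1)) :=
    (tanh_tendsto_atTop.comp tendsto_neg_atBot_atTop).neg
  simpa [Real.tanh_neg] using h

/-- **Theorem.** `tanh` is a Unit-Safe Saturating Function with constant `ε = 1/2`:
it is smooth, odd, its derivative is `1 - tanh² x` which is strictly positive,
it saturates to `±1` at `±∞`, and `x² (1 - tanh² x) ≤ 1/2` for all `x`. -/
theorem tanh_is_USSF :
    ContDiff ℝ (⊤ : ℕ∞) Real.tanh ∧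
    (∀ x : ℝ, Real.tanh (-x) = -Real.tanh x) ∧
    (∀ x : ℝ, deriv Real.tanh x = 1 - Real.tanh x ^ 2) ∧
    (∀ x : ℝ, 0 < 1 - Real.tanh x ^ 2) ∧
    Tendsto Real.tanh atTop (𝓝 1) ∧
    Tendsto Real.tanh atBot (𝓝 (-1)) ∧
    (∀ x : ℝ, x ^ 2 * (1 - Real.tanh x ^ 2) ≤ 1 / 2) := by
  refine ⟨?_, fun x => Real.tanh_neg x, fun x => (tanh_deriv x).deriv, ?_, tanh_tendsto_atTop,
    tanh_tendsto_atBot, ?_⟩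
  · rw [tanh_eq_fun]
    exact Real.contDiff_sinh.div Real.contDiff_cosh fun x => (Real.cosh_pos x).ne'
  · intro x
    rw [one_sub_tanh_sq]
    positivity
  · intro x
    rw [one_sub_tanh_sq]
    have hc : (0:ℝ) < Real.cosh x ^ 2 := by positivity
    rw [mul_one_div, div_le_div_iff₀ hc (by norm_num)]
    linarith [key_cosh_sq x]
end

section
/- Let f : ℝ → ℝ be a Unit-Safe Saturating Function with constant ε > 0, let k₁, k₂, k₃ > 0, and let ι ≥ 3 be an odd natural number. Then for every e ∈ ℝ, e·(−k₁·f(e) − k₂·e^{ι−1}·f(e^ι) − k₃·e) ≤ −k₁·|e| − k₂·|e|^ι − k₃·e² + (k₁ + k₂)·ε. -/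
open Filter Topology

theorem ussf_key (f : ℝ → ℝ) (ε : ℝ) (hε : 0 < ε)
    (hsmooth : ContDiff ℝ (⊤ : ℕ∞) f)
    (hodd : ∀ x : ℝ, f (-x) = -f x)
    (hsat_top : Tendsto f atTop (𝓝 1))
    (hslope : ∀ x : ℝ, x ^ 2 * deriv f x ≤ ε) :
    ∀ x : ℝ, |x| - ε ≤ x * f x := by
  have hdiff : Differentiable ℝ f := hsmooth.differentiable (by simp)
  have hpos : ∀ x : ℝ, 0 < x → x - ε ≤ x * f x := by
    intro x hx
    have hg : AntitoneOn (fun t : ℝ => f t + ε * t⁻¹) (Set.Ici x) := by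
      have hder : ∀ t : ℝ, 0 < t → HasDerivAt (fun t : ℝ => f t + ε * t⁻¹)
          (deriv f t + ε * (-(t ^ 2)⁻¹)) t := fun t htpos =>
        (hdiff t).hasDerivAt.add ((hasDerivAt_inv (ne_of_gt htpos)).const_mul ε)
      apply antitoneOn_of_deriv_nonpos (convex_Ici x)
      · apply (hdiff.continuous.continuousOn).add
        exact continuousOn_const.mul (continuousOn_inv₀.mono
          (fun t ht => ne_of_gt (lt_of_lt_of_le hx ht)))
      · intro t ht
        rw [interior_Ici] at ht
        exact ((hder t (hx.trans ht)).differentiableAt).differentiableWithinAt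
      · intro t ht
        rw [interior_Ici] at ht
        have htpos : 0 < t := hx.trans ht
        rw [(hder t htpos).deriv]
        have := hslope t
        have ht2 : 0 < t ^ 2 := by positivity
        have hinv : (t ^ 2)⁻¹ * t ^ 2 = 1 := inv_mul_cancel₀ (ne_of_gt ht2)
        nlinarith
    have hev : ∀ᶠ y in atTop, f y + ε * y⁻¹ ≤ f x + ε * x⁻¹ := by
      filter_upwards [eventually_ge_atTop x] with y hy
      exact hg (Set.self_mem_Ici) hy hy
    have hlim : Tendsto (fun y : ℝ => f y + ε * y⁻¹) atTop (𝓝 (1 + ε * 0)) :=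
      hsat_top.add (tendsto_const_nhds.mul tendsto_inv_atTop_zero)
    have h1 : (1 : ℝ) + ε * 0 ≤ f x + ε * x⁻¹ := le_of_tendsto hlim hev
    have hx' : x ≠ 0 := ne_of_gt hx
    have h2 := mul_le_mul_of_nonneg_left h1 (le_of_lt hx)
    have h3 : x * (f x + ε * x⁻¹) = x * f x + ε * (x * x⁻¹) := by ring
    rw [mul_inv_cancel₀ hx'] at h3
    rw [h3] at h2
    ring_nf at h2 ⊢
    linarith
  intro x
  rcases lt_trichotomy x 0 with h | h | h
  · have h0 : 0 < -x := by linarith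
    have := hpos (-x) h0
    rw [hodd x] at this
    rw [abs_of_neg h]
    nlinarith
  · subst h
    have : f 0 = 0 := by have := hodd 0; simp at this; linarith
    simp [this]
    linarith
  · rw [abs_of_pos h]; exact hpos x h

/-- **Theorem.** Let `f` be a Unit-Safe Saturating Function with constant `ε > 0`,
let `k₁, k₂, k₃ > 0`, and let `ι ≥ 3` be an odd natural number. Then for every `e`,
`e (-k₁ f(e) - k₂ e^{ι-1} f(e^ι) - k₃ e) ≤ -k₁|e| - k₂|e|^ι - k₃ e² + (k₁+k₂) ε`. -/
theorem ussf_backstepping_bound (f : ℝ → ℝ) (ε : ℝ) (hε : 0 < ε)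
    (hsmooth : ContDiff ℝ (⊤ : ℕ∞) f)
    (hodd : ∀ x : ℝ, f (-x) = -f x)
    (hderiv_pos : ∀ x : ℝ, 0 < deriv f x)
    (hsat_top : Tendsto f atTop (𝓝 1))
    (hsat_bot : Tendsto f atBot (𝓝 (-1)))
    (hslope : ∀ x : ℝ, x ^ 2 * deriv f x ≤ ε)
    (k₁ k₂ k₃ : ℝ) (hk₁ : 0 < k₁) (hk₂ : 0 < k₂) (hk₃ : 0 < k₃)
    (ι : ℕ) (hι : 3 ≤ ι) (hι_odd : Odd ι) :
    ∀ e : ℝ,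
      e * (-k₁ * f e - k₂ * e ^ (ι - 1) * f (e ^ ι) - k₃ * e)
        ≤ -k₁ * |e| - k₂ * |e| ^ ι - k₃ * e ^ 2 + (k₁ + k₂) * ε := by
  intro e
  have key := ussf_key f ε hε hsmooth hodd hsat_top hslope
  have h1 := key e
  have h2 := key (e ^ ι)
  rw [abs_pow] at h2
  have hpow : e * e ^ (ι - 1) = e ^ ι := by
    rw [← pow_succ']
    congr 1
    omega
  have hLHS : e * (-k₁ * f e - k₂ * e ^ (ι - 1) * f (e ^ ι) - k₃ * e)
      = -k₁ * (e * f e) - k₂ * (e ^ ι * f (e ^ ι)) - k₃ * e ^ 2 := by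
    rw [← hpow]; ring
  rw [hLHS]
  nlinarith
end

section
/- Let V : [0, ∞) → ℝ be differentiable with V(t) ≥ 0 for all t ≥ 0, and suppose there exist constants κ₁ > 0, κ₂ > 0, ι > 2, C ≥ 0, and θ ∈ (0, 1) such that V′(t) ≤ −κ₁·V(t)^{1/2} − κ₂·V(t)^{ι/2} + C for all t ≥ 0. Define the residual level Δ = max( (C/(θ·κ₁))², (C/(θ·κ₂))^{2/ι} ) and the time bound T = 2/((1−θ)·κ₁) + 2/((1−θ)·κ₂·(ι/2 − 1)). Then for all t ≥ T, V(t) ≤ Δ; in particular T does not depend on the initial value V(0). -/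
/-!
Above the residual level `Δ`, the constant `C` is absorbed by a `θ`-fraction of each decay
term, so `V' ≤ -(1-θ)κ₁ V^{1/2}` and `V' ≤ -(1-θ)κ₂ V^{ι/2}` there; in particular `{V ≤ Δ}`
is forward invariant. If `V` stayed above `Δ` on `[0, T]`, the superlinear term would make
`V^{1-ι/2}` grow at rate `(ι/2-1)(1-θ)κ₂`, pushing `V` below `1` within the second summand of
`T` whatever `V(0)` is; the sublinear term then makes `V^{1/2}` decrease at rate `(1-θ)κ₁/2`,
driving it to `0` within the first summand, which contradicts `V > Δ ≥ 0`.
-/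

open Set

theorem le_of_deriv_right_neg_of_lt {f f' : ℝ → ℝ} {a b c : ℝ} (hab : a ≤ b)
    (hf : ContinuousOn f (Icc a b)) (hf' : ∀ x ∈ Ico a b, HasDerivWithinAt f (f' x) (Ici x) x)
    (hneg : ∀ x ∈ Ico a b, c < f x → f' x < 0) (ha : f a ≤ c) : f b ≤ c := by
  refine le_of_forall_pos_le_add fun ε hε => ?_
  exact image_le_of_deriv_right_lt_deriv_boundary hf hf' (B := fun _ => c + ε) (B' := fun _ => 0)
    (by linarith) (fun _ => hasDerivAt_const _ _) (fun x hx hfx => hneg x hx (by linarith))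
    (right_mem_Icc.2 hab)

section PowerDecay

variable {V V' : ℝ → ℝ} {a b k p : ℝ}

theorem hasDerivAt_rpow_one_sub {x : ℝ} (hV : HasDerivAt V (V' x) x) (hx : 0 < V x) :
    HasDerivAt (fun y => V y ^ (1 - p)) ((1 - p) * (V x ^ (-p) * V' x)) x := by
  convert hV.rpow_const (p := 1 - p) (Or.inl hx.ne') using 1
  rw [sub_sub_cancel_left]
  ring

theorem rpow_neg_mul_le_of_le_neg_mul_rpow {v d : ℝ} (hv : 0 < v) (hd : d ≤ -k * v ^ p) :
    v ^ (-p) * d ≤ -k := by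
  have hvp : v ^ p ≠ 0 := (Real.rpow_pos_of_pos hv p).ne'
  calc v ^ (-p) * d ≤ v ^ (-p) * (-k * v ^ p) := by gcongr
    _ = -k := by rw [Real.rpow_neg hv.le]; field_simp

theorem one_sub_mul_rpow_one_sub_sub_le_of_decay (hab : a ≤ b)
    (hcont : ContinuousOn V (Icc a b)) (hderiv : ∀ x ∈ Ioo a b, HasDerivAt V (V' x) x)
    (hpos : ∀ x ∈ Icc a b, 0 < V x) (hdecay : ∀ x ∈ Ioo a b, V' x ≤ -k * V x ^ p) :
    (1 - p) * (V b ^ (1 - p) - V a ^ (1 - p)) ≤ -((1 - p) ^ 2 * k) * (b - a) := by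
  have hg : ∀ x ∈ interior (Icc a b), HasDerivAt (fun y => (1 - p) * V y ^ (1 - p))
      ((1 - p) * ((1 - p) * (V x ^ (-p) * V' x))) x := by
    rw [interior_Icc]
    exact fun x hx =>
      (hasDerivAt_rpow_one_sub (hderiv x hx) (hpos x (Ioo_subset_Icc_self hx))).const_mul _
  rw [mul_sub]
  refine (convex_Icc a b).image_sub_le_mul_sub_of_deriv_le
    (f := fun y => (1 - p) * V y ^ (1 - p))
    (continuousOn_const.mul (hcont.rpow_const fun x hx => Or.inl (hpos x hx).ne'))
    (fun x hx => (hg x hx).differentiableAt.differentiableWithinAt) (fun x hx => ?_)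
    a (left_mem_Icc.2 hab) b (right_mem_Icc.2 hab) hab
  rw [(hg x hx).deriv]
  rw [interior_Icc] at hx
  have := rpow_neg_mul_le_of_le_neg_mul_rpow (hpos x (Ioo_subset_Icc_self hx)) (hdecay x hx)
  nlinarith [sq_nonneg (1 - p)]

theorem rpow_one_sub_sub_le_of_decay (hp : p < 1) (hab : a ≤ b)
    (hcont : ContinuousOn V (Icc a b)) (hderiv : ∀ x ∈ Ioo a b, HasDerivAt V (V' x) x)
    (hpos : ∀ x ∈ Icc a b, 0 < V x) (hdecay : ∀ x ∈ Ioo a b, V' x ≤ -k * V x ^ p) :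
    V b ^ (1 - p) - V a ^ (1 - p) ≤ -((1 - p) * k) * (b - a) := by
  have h := one_sub_mul_rpow_one_sub_sub_le_of_decay hab hcont hderiv hpos hdecay
  refine le_of_mul_le_mul_left ?_ (sub_pos.2 hp)
  linarith

theorem mul_sub_le_rpow_one_sub_sub_of_decay (hp : 1 < p) (hab : a ≤ b)
    (hcont : ContinuousOn V (Icc a b)) (hderiv : ∀ x ∈ Ioo a b, HasDerivAt V (V' x) x)
    (hpos : ∀ x ∈ Icc a b, 0 < V x) (hdecay : ∀ x ∈ Ioo a b, V' x ≤ -k * V x ^ p) :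
    (p - 1) * k * (b - a) ≤ V b ^ (1 - p) - V a ^ (1 - p) := by
  have h := one_sub_mul_rpow_one_sub_sub_le_of_decay hab hcont hderiv hpos hdecay
  refine (mul_le_mul_left_of_neg (sub_neg.2 hp)).1 ?_
  linarith

end PowerDecay

theorem not_forall_pos_of_two_phase_decay {V V' : ℝ → ℝ} {a b c k₁ k₂ p : ℝ} (hp : 1 < p)
    (hab : a ≤ b) (hbc : b ≤ c) (hA : 1 ≤ (p - 1) * k₂ * (b - a)) (hB : 2 ≤ k₁ * (c - b))
    (hcont : ContinuousOn V (Icc a c)) (hderiv : ∀ x ∈ Ioo a c, HasDerivAt V (V' x) x)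
    (hdecay₁ : ∀ x ∈ Ioo a c, V' x ≤ -k₁ * V x ^ ((1 : ℝ) / 2))
    (hdecay₂ : ∀ x ∈ Ioo a c, V' x ≤ -k₂ * V x ^ p) :
    ¬ ∀ x ∈ Icc a c, 0 < V x := by
  intro hpos
  have hIcc_ab : Icc a b ⊆ Icc a c := Icc_subset_Icc_right hbc
  have hIoo_ab : Ioo a b ⊆ Ioo a c := Ioo_subset_Ioo_right hbc
  have hIcc_bc : Icc b c ⊆ Icc a c := Icc_subset_Icc_left hab
  have hIoo_bc : Ioo b c ⊆ Ioo a c := Ioo_subset_Ioo_left hab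
  have hVb : V b ≤ 1 := by
    have hgrow := mul_sub_le_rpow_one_sub_sub_of_decay hp hab (hcont.mono hIcc_ab)
      (fun x hx => hderiv x (hIoo_ab hx)) (fun x hx => hpos x (hIcc_ab hx))
      (fun x hx => hdecay₂ x (hIoo_ab hx))
    have hVa : 0 ≤ V a ^ (1 - p) :=
      Real.rpow_nonneg (hpos a (left_mem_Icc.2 (hab.trans hbc))).le _
    by_contra! hVb
    linarith [Real.rpow_lt_one_of_one_lt_of_neg hVb (sub_neg.2 hp)]
  have hshrink := rpow_one_sub_sub_le_of_decay (by norm_num) hbc (hcont.mono hIcc_bc)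
    (fun x hx => hderiv x (hIoo_bc hx)) (fun x hx => hpos x (hIcc_bc hx))
    (fun x hx => hdecay₁ x (hIoo_bc hx))
  have hVb' : V b ^ (1 - (1 : ℝ) / 2) ≤ 1 :=
    Real.rpow_le_one (hpos b (hIcc_ab (right_mem_Icc.2 hab))).le hVb (by norm_num)
  have hVc : 0 < V c ^ (1 - (1 : ℝ) / 2) :=
    Real.rpow_pos_of_pos (hpos c (right_mem_Icc.2 (hab.trans hbc))) _
  linarith

theorem le_of_decay_above {V V' : ℝ → ℝ} {Δ k₁ k₂ p T₁ T₂ : ℝ} (hp : 1 < p)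
    (hk₁ : 0 < k₁) (hk₂ : 0 < k₂) (hΔ : 0 ≤ Δ) (hT₁ : 2 ≤ k₁ * T₁) (hT₂ : 1 ≤ (p - 1) * k₂ * T₂)
    (hV : ∀ x, 0 ≤ x → HasDerivWithinAt V (V' x) (Ici 0) x)
    (hdecay : ∀ x, 0 ≤ x → Δ < V x → V' x ≤ -k₁ * V x ^ ((1 : ℝ) / 2) ∧ V' x ≤ -k₂ * V x ^ p) :
    ∀ t, T₁ + T₂ ≤ t → V t ≤ Δ := by
  intro t ht
  have hT₁0 : 0 ≤ T₁ := by nlinarith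
  have hT₂0 : 0 ≤ T₂ := by nlinarith [mul_pos (sub_pos.2 hp) hk₂]
  have hcont : ContinuousOn V (Ici 0) := fun x hx => (hV x hx).continuousWithinAt
  obtain ⟨u, hu, hVu⟩ : ∃ u ∈ Icc 0 (T₂ + T₁), V u ≤ Δ := by
    by_contra! hlt
    refine not_forall_pos_of_two_phase_decay hp hT₂0 (by linarith) (by simpa using hT₂)
      (by simpa using hT₁) (hcont.mono fun x hx => hx.1)
      (fun x hx => (hV x hx.1.le).hasDerivAt (Ici_mem_nhds hx.1))
      (fun x hx => (hdecay x hx.1.le (hlt x (Ioo_subset_Icc_self hx))).1)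
      (fun x hx => (hdecay x hx.1.le (hlt x (Ioo_subset_Icc_self hx))).2)
      (fun x hx => hΔ.trans_lt (hlt x hx))
  refine le_of_deriv_right_neg_of_lt (by linarith [hu.2]) (hcont.mono fun x hx => hu.1.trans hx.1)
    (fun x hx => (hV x (hu.1.trans hx.1)).mono (Ici_subset_Ici.2 (hu.1.trans hx.1)))
    (fun x hx hΔx => ?_) hVu
  have hVx : 0 < V x ^ p := Real.rpow_pos_of_pos (hΔ.trans_lt hΔx) p
  nlinarith [(hdecay x (hu.1.trans hx.1) hΔx).2]

theorem le_mul_rpow_of_div_rpow_inv_le {C c r v : ℝ} (hC : 0 ≤ C) (hc : 0 < c) (hr : 0 < r)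
    (hv : 0 ≤ v) (h : (C / c) ^ r⁻¹ ≤ v) : C ≤ c * v ^ r := by
  rw [Real.rpow_inv_le_iff_of_pos (by positivity) hv hr, div_le_iff₀ hc] at h
  linarith

theorem le_neg_mul_rpow_of_level_lt {κ₁ κ₂ r₁ r₂ C θ v d : ℝ} (hκ₁ : 0 < κ₁) (hκ₂ : 0 < κ₂)
    (hr₁ : 0 < r₁) (hr₂ : 0 < r₂) (hC : 0 ≤ C) (hθ : 0 < θ) (hv : 0 ≤ v)
    (hd : d ≤ -κ₁ * v ^ r₁ - κ₂ * v ^ r₂ + C)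
    (hlevel : max ((C / (θ * κ₁)) ^ r₁⁻¹) ((C / (θ * κ₂)) ^ r₂⁻¹) < v) :
    d ≤ -((1 - θ) * κ₁) * v ^ r₁ ∧ d ≤ -((1 - θ) * κ₂) * v ^ r₂ := by
  have h₁ : C ≤ θ * κ₁ * v ^ r₁ := le_mul_rpow_of_div_rpow_inv_le hC (by positivity) hr₁ hv
    ((le_max_left _ _).trans hlevel.le)
  have h₂ : C ≤ θ * κ₂ * v ^ r₂ := le_mul_rpow_of_div_rpow_inv_le hC (by positivity) hr₂ hv
    ((le_max_right _ _).trans hlevel.le)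
  have hv₁ : 0 ≤ κ₁ * v ^ r₁ := by positivity
  have hv₂ : 0 ≤ κ₂ * v ^ r₂ := by positivity
  constructor <;> linarith

/-- **Theorem (fixed-time comparison lemma).** Let `V : [0,∞) → ℝ` be
differentiable and nonnegative, and suppose there are constants `κ₁, κ₂ > 0`,
`ι > 2`, `C ≥ 0`, `θ ∈ (0,1)` with
`V'(t) ≤ -κ₁ V(t)^{1/2} - κ₂ V(t)^{ι/2} + C` for all `t ≥ 0`.
With the residual level `Δ = max ((C/(θκ₁))², (C/(θκ₂))^{2/ι})` and the fixed
time `T = 2/((1-θ)κ₁) + 2/((1-θ)κ₂(ι/2 - 1))`, we have `V(t) ≤ Δ` for all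
`t ≥ T`; in particular `T` is independent of `V(0)`. -/
theorem fixed_time_comparison (V : ℝ → ℝ)
    (hdiff : DifferentiableOn ℝ V (Ici 0))
    (hnonneg : ∀ t : ℝ, 0 ≤ t → 0 ≤ V t)
    (κ₁ κ₂ ι C θ : ℝ)
    (hκ₁ : 0 < κ₁) (hκ₂ : 0 < κ₂) (hι : 2 < ι) (hC : 0 ≤ C)
    (hθ₀ : 0 < θ) (hθ₁ : θ < 1)
    (hV' : ∀ t : ℝ, 0 ≤ t →
      derivWithin V (Ici 0) t
        ≤ -κ₁ * V t ^ ((1 : ℝ) / 2) - κ₂ * V t ^ (ι / 2) + C)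
    (Δ T : ℝ)
    (hΔ : Δ = max ((C / (θ * κ₁)) ^ (2 : ℝ)) ((C / (θ * κ₂)) ^ ((2 : ℝ) / ι)))
    (hT : T = 2 / ((1 - θ) * κ₁) + 2 / ((1 - θ) * κ₂ * (ι / 2 - 1))) :
    ∀ t : ℝ, T ≤ t → V t ≤ Δ := by
  have hk₁ : 0 < (1 - θ) * κ₁ := mul_pos (sub_pos.2 hθ₁) hκ₁
  have hk₂ : 0 < (1 - θ) * κ₂ := mul_pos (sub_pos.2 hθ₁) hκ₂
  have hp : 0 < ι / 2 - 1 := by linarith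
  have hΔ₀ : 0 ≤ Δ := hΔ ▸ le_max_of_le_left (Real.rpow_nonneg (by positivity) _)
  have hΔ' : Δ = max ((C / (θ * κ₁)) ^ ((1 : ℝ) / 2)⁻¹) ((C / (θ * κ₂)) ^ (ι / 2)⁻¹) := by
    rw [hΔ, one_div (2 : ℝ), inv_inv, inv_div]
  have hT₁ : (1 - θ) * κ₁ * (2 / ((1 - θ) * κ₁)) = 2 := mul_div_cancel₀ 2 hk₁.ne'
  have hT₂ : (1 - θ) * κ₂ * (ι / 2 - 1) * (2 / ((1 - θ) * κ₂ * (ι / 2 - 1))) = 2 :=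
    mul_div_cancel₀ 2 (by positivity)
  rw [hT]
  refine le_of_decay_above (p := ι / 2) (by linarith) hk₁ hk₂ hΔ₀ hT₁.ge (by linarith)
    (fun x hx => (hdiff x hx).hasDerivWithinAt) fun x hx hlt => ?_
  exact le_neg_mul_rpow_of_level_lt hκ₁ hκ₂ (by norm_num) (by linarith) hC hθ₀ (hnonneg x hx)
    (hV' x hx) (hΔ' ▸ hlt)
end

section
/- Let f : ℝ → ℝ be a Unit-Safe Saturating Function with constant ε > 0 and let ι ≥ 3 be an odd natural number. Then for every e ∈ ℝ, e^ι·f(e^ι) ≥ |e|^ι − ε. -/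
open Filter Topology

/-- **Theorem.** Let `f` be a Unit-Safe Saturating Function with constant `ε > 0`
and let `ι ≥ 3` be an odd natural number. Then for every real `e`,
`e^ι f(e^ι) ≥ |e|^ι - ε`. -/
theorem ussf_pow_mul_lower_bound (f : ℝ → ℝ) (ε : ℝ) (hε : 0 < ε)
    (hsmooth : ContDiff ℝ (⊤ : ℕ∞) f)
    (hodd : ∀ x : ℝ, f (-x) = -f x)
    (hderiv_pos : ∀ x : ℝ, 0 < deriv f x)
    (hsat_top : Tendsto f atTop (𝓝 1))
    (hsat_bot : Tendsto f atBot (𝓝 (-1)))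
    (hslope : ∀ x : ℝ, x ^ 2 * deriv f x ≤ ε)
    (ι : ℕ) (hι : 3 ≤ ι) (hι_odd : Odd ι) :
    ∀ e : ℝ, e ^ ι * f (e ^ ι) ≥ |e| ^ ι - ε := by
  have hdiff : Differentiable ℝ f := hsmooth.differentiable (by simp)
  -- main lemma : for y ≥ 0, y - ε ≤ y * f y
  have key : ∀ y : ℝ, 0 ≤ y → y - ε ≤ y * f y := by
    intro y hy
    rcases eq_or_lt_of_le hy with h0 | hy
    · simp [← h0]; linarith
    · set g : ℝ → ℝ := fun x => f x + ε * x⁻¹ with hg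
      have hanti : AntitoneOn g (Set.Ici y) := by
        apply antitoneOn_of_deriv_nonpos (convex_Ici y)
        · apply ContinuousOn.add (hdiff.continuous.continuousOn)
          apply ContinuousOn.mul continuousOn_const
          exact ContinuousOn.inv₀ continuousOn_id fun x hx => (hy.trans_le hx).ne'
        · exact fun x hx => (hdiff.differentiableAt.add
            (((differentiableAt_inv (hy.trans (by simpa using hx)).ne').const_mul ε))).differentiableWithinAt
        · intro x hx
          rw [interior_Ici] at hx
          have hx0 : (0:ℝ) < x := hy.trans hx
          have hder : HasDerivAt g (deriv f x + ε * (-(x ^ 2)⁻¹)) x :=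
            (hdiff x).hasDerivAt.add ((hasDerivAt_inv hx0.ne').const_mul ε)
          rw [hder.deriv]
          have h1 := hslope x
          have h2 : (0:ℝ) < x ^ 2 := by positivity
          have : deriv f x ≤ ε / x ^ 2 := by
            rw [le_div_iff₀ h2]; linarith [h1]
          have : ε * (x ^ 2)⁻¹ = ε / x ^ 2 := by ring
          nlinarith [hslope x, sq_nonneg x]
      have hlim : Tendsto g atTop (𝓝 (1 + ε * 0)) :=
        hsat_top.add (tendsto_inv_atTop_zero.const_mul ε)
      have h1le : 1 + ε * 0 ≤ g y := by
        apply le_of_tendsto hlim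
        filter_upwards [eventually_ge_atTop y] with x hx
        exact hanti (Set.self_mem_Ici) hx hx
      have : 1 ≤ f y + ε * y⁻¹ := by simpa [hg] using h1le
      have hy' : y ≠ 0 := hy.ne'
      have : y * 1 ≤ y * (f y + ε * y⁻¹) := by
        exact mul_le_mul_of_nonneg_left this hy.le
      calc y - ε ≤ y * (f y + ε * y⁻¹) - ε := by linarith [this]
        _ = y * f y + ε * (y⁻¹ * y) - ε := by ring
        _ = y * f y := by rw [inv_mul_cancel₀ hy']; ring
  intro e
  rw [ge_iff_le, ← abs_pow]
  set y := e ^ ι with hy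
  rcases le_or_gt 0 y with h | h
  · rw [abs_of_nonneg h]; exact key y h
  · rw [abs_of_neg h]
    have := key (-y) (by linarith)
    have hodd' : f y = -f (-y) := by rw [← hodd]; simp
    rw [hodd']
    nlinarith [this]
end
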